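/- Let r ≥ 2 and let V_0 ~ Beta(1,α1), V_k ~ Beta(1+α1+···+α_k, α_{k+1}) for k = 1,...,r−1 be independent, with all α_i > 0. Define S_i = V_0·V_1···V_{r−i} for i = 1,...,r. Then S_i ~ Beta(1, α1 + ··· + α_{r−i+1}) for every i. -/

import Mathlib

open MeasureTheory ProbabilityTheory Real Filter

/-- The density of a Beta(a,b) random variable on (0,1). -/
noncomputable def betaPDFReal (a b x : ℝ) : ℝ :=
  if 0 < x ∧ x < 1 then
    (Real.Gamma (a + b) / (Real.Gamma a * Real.Gamma b)) * x ^ (a - 1) * (1 - x) ^ (b - 1)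
  else 0

/-- The Beta(a,b) probability measure on ℝ. -/
noncomputable def betaMeasure (a b : ℝ) : Measure ℝ :=
  MeasureTheory.volume.withDensity (fun x => ENNReal.ofReal (_root_.betaPDFReal a b x))

/-- `X` is a beta random variable with parameters `(a, b)` on `(Ω, μ)`. -/
def HasBetaLaw {Ω : Type*} [MeasurableSpace Ω] (μ : Measure Ω) (X : Ω → ℝ) (a b : ℝ) : Prop :=
  Measurable X ∧ μ.map X = _root_.betaMeasure a b

/-! If `X ~ Beta(a + b, c)` and `Y ~ Beta(a, b)` are independent, then `X Y ~ Beta(a, b + c)`.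
Substituting `z = x y`, the density of `X Y` at `z` is `∫ f_X(x) f_Y(z / x) dx / x`, and for
`0 < z < x < 1` the integrand is a constant times `z^(a-1) (x-z)^(b-1) (1-x)^(c-1)`: a beta
integral over `(z, 1)` in `x`, giving `(1 - z)^(b+c-1)`. The constants agree by the beta product
rule `B(a, b) B(a + b, c) = B(b, c) B(a, b + c)`.

Taking `a = 1`, `b = α₁ + ⋯ + α_k`, `c = α_{k+1}` turns `V₀ ⋯ V_{k-1} ~ Beta(1, α₁ + ⋯ + α_k)`
into `V₀ ⋯ V_k ~ Beta(1, α₁ + ⋯ + α_{k+1})`, and each `S_i` is such a partial product. -/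

open scoped ENNReal

theorem betaMeasure_eq_probabilityTheory_betaMeasure (a b : ℝ) :
    _root_.betaMeasure a b = ProbabilityTheory.betaMeasure a b := by
  unfold _root_.betaMeasure ProbabilityTheory.betaMeasure
  congr 1 with x
  rw [betaPDF_eq, _root_.betaPDFReal, beta, one_div_div]

theorem Real.lintegral_comp_mul_left (f : ℝ → ℝ≥0∞) {a : ℝ} (ha : a ≠ 0) :
    ∫⁻ x, f (a * x) = ENNReal.ofReal |a⁻¹| * ∫⁻ x, f x := by
  have h := lintegral_map_equiv f (Homeomorph.mulLeft₀ a ha).toMeasurableEquiv (μ := volume)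
  rw [show ⇑(Homeomorph.mulLeft₀ a ha).toMeasurableEquiv = (a * ·) from rfl,
    Real.map_volume_mul_left ha, lintegral_smul_measure, smul_eq_mul] at h
  exact h.symm

namespace ProbabilityTheory

variable {a b c : ℝ}

@[fun_prop]
theorem measurable_betaPDF (a b : ℝ) : Measurable (betaPDF a b) :=
  (measurable_betaPDFReal a b).ennreal_ofReal

instance (a b : ℝ) : SFinite (betaMeasure a b) := by
  rw [betaMeasure]
  infer_instance

theorem beta_mul_beta_add (ha : 0 < a) (hb : 0 < b) (hc : 0 < c) :
    beta a b * beta (a + b) c = beta b c * beta a (b + c) := by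
  have h₁ := (Gamma_pos_of_pos (add_pos ha hb)).ne'
  have h₂ := (Gamma_pos_of_pos (add_pos hb hc)).ne'
  simp only [beta, ← add_assoc]
  field_simp

theorem lintegral_betaPDF_comp_sub_div (hb : 0 < b) (hc : 0 < c) {z : ℝ} (hz : z < 1) :
    ∫⁻ x, betaPDF b c ((x - z) / (1 - z)) = ENNReal.ofReal (1 - z) := by
  have hz' : (1 - z)⁻¹ ≠ 0 := inv_ne_zero (sub_pos.2 hz).ne'
  simp_rw [div_eq_inv_mul]
  rw [lintegral_sub_right_eq_self (fun x => betaPDF b c ((1 - z)⁻¹ * x)),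
    Real.lintegral_comp_mul_left (betaPDF b c) hz', lintegral_betaPDF_eq_one hb hc, mul_one,
    inv_inv, abs_of_pos (sub_pos.2 hz)]

theorem betaPDF_eq_zero_of_notMem_Ioo {x : ℝ} (hx : x ∉ Set.Ioo 0 1) : betaPDF a b x = 0 := by
  rw [betaPDF_eq, if_neg (by simpa using hx), ENNReal.ofReal_zero]

theorem betaPDFReal_nonneg (ha : 0 < a) (hb : 0 < b) (x : ℝ) : 0 ≤ betaPDFReal a b x := by
  by_cases hx : 0 < x ∧ x < 1
  · exact (betaPDFReal_pos hx.1 hx.2 ha hb).le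
  · simp [betaPDFReal, hx]

theorem betaPDFReal_mul_inv_mul_betaPDFReal_div (ha : 0 < a) (hb : 0 < b) (hc : 0 < c)
    {x z : ℝ} (hz : 0 < z) (hzx : z < x) (hx : x < 1) :
    betaPDFReal (a + b) c x * x⁻¹ * betaPDFReal a b (z / x) =
      betaPDFReal a (b + c) z * (1 - z)⁻¹ * betaPDFReal b c ((x - z) / (1 - z)) := by
  have hx₀ : 0 < x := hz.trans hzx
  have h₁ : 0 < 1 - z := by linarith
  have h₂ : 0 < x - z := by linarith
  have h₃ : 0 < 1 - x := by linarith
  rw [betaPDFReal, if_pos ⟨hx₀, hx⟩, betaPDFReal, if_pos ⟨div_pos hz hx₀, (div_lt_one hx₀).2 hzx⟩,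
    betaPDFReal, if_pos ⟨hz, by linarith⟩, betaPDFReal,
    if_pos ⟨div_pos h₂ h₁, (div_lt_one h₁).2 (by linarith)⟩]
  have e₁ : 1 - z / x = (x - z) / x := by field_simp
  have e₂ : 1 - (x - z) / (1 - z) = (1 - x) / (1 - z) := by field_simp; ring
  have e₃ : x ^ (a + b - 1) = x ^ (a - 1) * x ^ (b - 1) * x := by
    rw [← rpow_add hx₀, ← rpow_add_one hx₀.ne']; ring_nf
  have e₄ : (1 - z) ^ (b + c - 1) = (1 - z) ^ (b - 1) * (1 - z) ^ (c - 1) * (1 - z) := by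
    rw [← rpow_add h₁, ← rpow_add_one h₁.ne']; ring_nf
  rw [e₁, e₂, e₃, e₄, div_rpow hz.le hx₀.le, div_rpow h₂.le hx₀.le, div_rpow h₂.le h₁.le,
    div_rpow h₃.le h₁.le]
  have := beta_pos (add_pos ha hb) hc
  have := beta_pos ha hb
  have := beta_pos hb hc
  have := beta_pos ha (add_pos hb hc)
  field_simp
  linear_combination -beta_mul_beta_add ha hb hc

/-- In `x`, the right-hand side is the `Beta(b, c)` density rescaled from `(0, 1)` to `(z, 1)`,
so integrating out `x` leaves the `Beta(a, b + c)` density at `z`. -/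
theorem betaPDF_mul_inv_mul_betaPDF_div (ha : 0 < a) (hb : 0 < b) (hc : 0 < c) (x z : ℝ) :
    betaPDF (a + b) c x * ENNReal.ofReal x⁻¹ * betaPDF a b (z / x) =
      betaPDF a (b + c) z * ENNReal.ofReal (1 - z)⁻¹ * betaPDF b c ((x - z) / (1 - z)) := by
  by_cases h : 0 < z ∧ z < x ∧ x < 1
  · obtain ⟨hz, hzx, hx⟩ := h
    have h₁ := betaPDFReal_nonneg (add_pos ha hb) hc x
    have h₂ := betaPDFReal_nonneg ha (add_pos hb hc) z
    have h₃ : 0 ≤ x⁻¹ := inv_nonneg.2 (by linarith)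
    have h₄ : 0 ≤ (1 - z)⁻¹ := inv_nonneg.2 (by linarith)
    simp only [betaPDF]
    rw [← ENNReal.ofReal_mul h₁, ← ENNReal.ofReal_mul (mul_nonneg h₁ h₃), ← ENNReal.ofReal_mul h₂,
      ← ENNReal.ofReal_mul (mul_nonneg h₂ h₄),
      betaPDFReal_mul_inv_mul_betaPDFReal_div ha hb hc hz hzx hx]
  · have lhs : betaPDF (a + b) c x = 0 ∨ betaPDF a b (z / x) = 0 := by
      by_cases hx : x ∈ Set.Ioo 0 1
      · refine .inr (betaPDF_eq_zero_of_notMem_Ioo fun ⟨h₁, h₂⟩ => h ⟨?_, ?_, hx.2⟩)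
        · exact (div_pos_iff_of_pos_right hx.1).1 h₁
        · exact (div_lt_one hx.1).1 h₂
      · exact .inl (betaPDF_eq_zero_of_notMem_Ioo hx)
    have rhs : betaPDF a (b + c) z = 0 ∨ betaPDF b c ((x - z) / (1 - z)) = 0 := by
      by_cases hz : z ∈ Set.Ioo 0 1
      · have hz₁ : 0 < 1 - z := sub_pos.2 hz.2
        refine .inr (betaPDF_eq_zero_of_notMem_Ioo fun ⟨h₁, h₂⟩ => h ⟨hz.1, ?_, ?_⟩)
        · linarith [(div_pos_iff_of_pos_right hz₁).1 h₁]
        · linarith [(div_lt_one hz₁).1 h₂]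
      · exact .inl (betaPDF_eq_zero_of_notMem_Ioo hz)
    rcases lhs with h | h <;> rcases rhs with h' | h' <;> simp [h, h']

theorem lintegral_betaPDF_mul_inv_mul_betaPDF_div (ha : 0 < a) (hb : 0 < b) (hc : 0 < c) (z : ℝ) :
    ∫⁻ x, betaPDF (a + b) c x * ENNReal.ofReal x⁻¹ * betaPDF a b (z / x) = betaPDF a (b + c) z := by
  simp_rw [betaPDF_mul_inv_mul_betaPDF_div ha hb hc _ z]
  rw [lintegral_const_mul _ (by fun_prop)]
  rcases lt_or_ge z 1 with hz | hz
  · rw [lintegral_betaPDF_comp_sub_div hb hc hz, mul_assoc,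
      ← ENNReal.ofReal_mul (inv_nonneg.2 (sub_pos.2 hz).le), inv_mul_cancel₀ (sub_pos.2 hz).ne',
      ENNReal.ofReal_one, mul_one]
  · rw [betaPDF_eq_zero_of_one_le hz, zero_mul, zero_mul]

theorem lintegral_comp_mul_prod_betaMeasure (ha : 0 < a) (hb : 0 < b) (hc : 0 < c)
    {φ : ℝ → ℝ≥0∞} (hφ : Measurable φ) :
    ∫⁻ p, φ (p.1 * p.2) ∂(betaMeasure (a + b) c).prod (betaMeasure a b) =
      ∫⁻ z, φ z ∂betaMeasure a (b + c) := by
  have inner (x : ℝ) : betaPDF (a + b) c x * ∫⁻ y, betaPDF a b y * φ (x * y) =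
      ∫⁻ z, betaPDF (a + b) c x * ENNReal.ofReal x⁻¹ * betaPDF a b (z / x) * φ z := by
    rcases le_or_gt x 0 with hx | hx
    · simp [betaPDF_eq_zero_of_nonpos hx]
    · have hscale : ∫⁻ y, betaPDF a b y * φ (x * y) =
          ENNReal.ofReal x⁻¹ * ∫⁻ z, betaPDF a b (z / x) * φ z := by
        rw [← abs_of_pos (inv_pos.2 hx), ← Real.lintegral_comp_mul_left _ hx.ne']
        simp_rw [mul_div_cancel_left₀ _ hx.ne']
      rw [hscale, ← lintegral_const_mul _ (by fun_prop), ← lintegral_const_mul _ (by fun_prop)]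
      simp_rw [mul_assoc]
  calc ∫⁻ p, φ (p.1 * p.2) ∂(betaMeasure (a + b) c).prod (betaMeasure a b)
      = ∫⁻ x, ∫⁻ y, φ (x * y) ∂betaMeasure a b ∂betaMeasure (a + b) c :=
        lintegral_prod _ (by fun_prop)
    _ = ∫⁻ x, betaPDF (a + b) c x * ∫⁻ y, betaPDF a b y * φ (x * y) := by
        rw [betaMeasure, lintegral_withDensity_eq_lintegral_mul _ (by fun_prop)
          (Measurable.lintegral_prod_right (f := fun x y => φ (x * y)) (by fun_prop))]
        congr with x
        rw [Pi.mul_apply, betaMeasure, lintegral_withDensity_eq_lintegral_mul _ (by fun_prop)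
          (g := fun y => φ (x * y)) (by fun_prop)]
        rfl
    _ = ∫⁻ z, ∫⁻ x, betaPDF (a + b) c x * ENNReal.ofReal x⁻¹ * betaPDF a b (z / x) * φ z := by
        simp_rw [inner]
        exact lintegral_lintegral_swap (by fun_prop)
    _ = ∫⁻ z, betaPDF a (b + c) z * φ z := by
        congr with z
        rw [lintegral_mul_const _ (by fun_prop), lintegral_betaPDF_mul_inv_mul_betaPDF_div ha hb hc]
    _ = ∫⁻ z, φ z ∂betaMeasure a (b + c) :=
        (lintegral_withDensity_eq_lintegral_mul _ (measurable_betaPDF _ _) hφ).symm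

theorem betaMeasure_prod_map_mul (ha : 0 < a) (hb : 0 < b) (hc : 0 < c) :
    ((betaMeasure (a + b) c).prod (betaMeasure a b)).map (fun p => p.1 * p.2) =
      betaMeasure a (b + c) :=
  Measure.ext_of_lintegral _ fun φ hφ => by
    rw [lintegral_map hφ measurable_mul]
    exact lintegral_comp_mul_prod_betaMeasure ha hb hc hφ

theorem iIndepFun.indepFun_prod_range_of_lt {Ω β : Type*} [MeasurableSpace Ω] {μ : Measure Ω}
    [MeasurableSpace β] [CommMonoid β] [MeasurableMul₂ β] {r : ℕ} {f : ℕ → Ω → β}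
    (hf : iIndepFun (fun k : Fin r => f k) μ) (hmeas : ∀ k < r, Measurable (f k))
    {m : ℕ} (hm : m < r) : IndepFun (∏ k ∈ Finset.range m, f k) (f m) μ := by
  have h := hf.indepFun_finsetProd_of_notMem (fun k => hmeas k k.2)
    (s := Finset.univ.map (Fin.castLEEmb hm.le)) (i := ⟨m, hm⟩)
    (by simpa [Fin.ext_iff] using fun k : Fin m => k.isLt.ne)
  simp only [Finset.prod_map, Fin.castLEEmb_apply, Fin.val_castLE] at h
  rwa [Fin.prod_univ_eq_prod_range (fun k => f k) m] at h

end ProbabilityTheory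

theorem HasBetaLaw.mul {Ω : Type*} [MeasurableSpace Ω] {μ : Measure Ω} {X Y : Ω → ℝ}
    {a b c : ℝ} (ha : 0 < a) (hb : 0 < b) (hc : 0 < c) (hX : HasBetaLaw μ X (a + b) c)
    (hY : HasBetaLaw μ Y a b) (hXY : IndepFun X Y μ) :
    HasBetaLaw μ (fun ω => X ω * Y ω) a (b + c) := by
  obtain ⟨hXm, hXlaw⟩ := hX
  obtain ⟨hYm, hYlaw⟩ := hY
  refine ⟨hXm.mul hYm, ?_⟩
  rw [betaMeasure_eq_probabilityTheory_betaMeasure] at hXlaw hYlaw ⊢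
  have := isProbabilityMeasureBeta (add_pos ha hb) hc
  have := isProbabilityMeasureBeta ha hb
  have hXY' := (indepFun_iff_map_prod_eq_prod_map_map' hXm.aemeasurable hYm.aemeasurable
    (by rw [hXlaw]; infer_instance) (by rw [hYlaw]; infer_instance)).1 hXY
  calc μ.map (fun ω => X ω * Y ω)
      = (μ.map fun ω => (X ω, Y ω)).map (fun p => p.1 * p.2) :=
        (Measure.map_map measurable_mul (hXm.prodMk hYm)).symm
    _ = ProbabilityTheory.betaMeasure a (b + c) := by
        rw [hXY', hXlaw, hYlaw, betaMeasure_prod_map_mul ha hb hc]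

theorem H2_multivariate_marginals_general {Ω : Type*} [MeasurableSpace Ω] (μ : Measure Ω)
    (r : ℕ) (α : ℕ → ℝ)
    (hα : ∀ i, 1 ≤ i → i ≤ r → 0 < α i) (V : ℕ → Ω → ℝ)
    (h0 : HasBetaLaw μ (V 0) 1 (α 1))
    (hk : ∀ k, 1 ≤ k → k ≤ r - 1 →
      HasBetaLaw μ (V k) (1 + ∑ j ∈ Finset.Icc 1 k, α j) (α (k + 1)))
    (hind : iIndepFun (fun k : Fin r => V k) μ) :
    ∀ i, 1 ≤ i → i ≤ r →
      HasBetaLaw μ (fun ω => ∏ k ∈ Finset.range (r - i + 1), V k ω) 1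
        (∑ j ∈ Finset.Icc 1 (r - i + 1), α j) := by
  have hmeas : ∀ k < r, Measurable (V k) := fun k hkr =>
    if h : k = 0 then h ▸ h0.1 else (hk k (by omega) (by omega)).1
  suffices h : ∀ m < r, HasBetaLaw μ (fun ω => ∏ k ∈ Finset.range (m + 1), V k ω) 1
      (∑ j ∈ Finset.Icc 1 (m + 1), α j) by
    intro i hi hir
    exact h (r - i) (by omega)
  intro m hm
  induction m with
  | zero => simpa using h0
  | succ n ih =>
    have hsum : 0 < ∑ j ∈ Finset.Icc 1 (n + 1), α j :=
      Finset.sum_pos (fun j hj => hα j (Finset.mem_Icc.1 hj).1 (by grind))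
        ⟨1, Finset.mem_Icc.2 ⟨le_rfl, by omega⟩⟩
    have hindep := hind.indepFun_prod_range_of_lt hmeas hm
    rw [Finset.prod_fn] at hindep
    have hstep := (hk (n + 1) (by omega) (by omega)).mul one_pos hsum (hα (n + 2) (by omega) hm)
      (ih (by omega)) hindep.symm
    simp_rw [Finset.prod_range_succ _ (n + 1), Finset.sum_Icc_succ_top (by omega : 1 ≤ n + 2)]
    simpa only [mul_comm, Finset.prod_apply] using hstep

theorem H2_multivariate_marginals {Ω : Type*} [MeasurableSpace Ω] (μ : Measure Ω)
    [IsProbabilityMeasure μ] (r : ℕ) (hr : 2 ≤ r) (α : ℕ → ℝ)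
    (hα : ∀ i, 1 ≤ i → i ≤ r → 0 < α i) (V : ℕ → Ω → ℝ)
    (h0 : HasBetaLaw μ (V 0) 1 (α 1))
    (hk : ∀ k, 1 ≤ k → k ≤ r - 1 →
      HasBetaLaw μ (V k) (1 + ∑ j ∈ Finset.Icc 1 k, α j) (α (k + 1)))
    (hind : iIndepFun (fun k : Fin r => V k) μ) :
    ∀ i, 1 ≤ i → i ≤ r →
      HasBetaLaw μ (fun ω => ∏ k ∈ Finset.range (r - i + 1), V k ω) 1
        (∑ j ∈ Finset.Icc 1 (r - i + 1), α j) :=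
  H2_multivariate_marginals_general μ r α hα V h0 hk hind
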